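/- Let P be the bidirectional path on vertices v₁,…,v_n (n ≥ 2) with directed edges (v_i, v_{i+1}) and (v_{i+1}, v_i) for all 1 ≤ i ≤ n−1, where for 2 ≤ i ≤ n−1 the edge from v_{i−1} to v_i has weight l_i > 0 and the edge from v_{i+1} to v_i has weight r_i > 0. Then ept_rzf(P, v₁) = Σ_{i=2}^{n−1} (l_i + r_i)/l_i + 1, and symmetrically ept_rzf(P, v_n) = Σ_{i=2}^{n−1} (l_i + r_i)/r_i + 1. -/

import Mathlib

open scoped ENNReal NNReal

namespace RZF

variable {V : Type*} [Fintype V] [DecidableEq V]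

/-- Probability that the white vertex `x` turns blue in one round of weighted
randomized zero forcing with weights `w`, given the current blue set `B`
(`0` when the total incoming weight of `x` is `0`). -/
noncomputable def turnProb (w : V → V → ℝ≥0) (B : Finset V) (x : V) : ℝ≥0 :=
  (∑ u ∈ B, w u x) / ∑ u, w u x

/-- One-round transition probability of the RZF Markov chain from blue set `B`
to blue set `C`: each white vertex independently turns blue with probability
`turnProb w B ·`, and blue vertices stay blue. -/
noncomputable def stepProb (w : V → V → ℝ≥0) (B C : Finset V) : ℝ≥0∞ :=
  if B ⊆ C then
    (∏ x ∈ C \ B, (turnProb w B x : ℝ≥0∞)) *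
      ∏ x ∈ Cᶜ, (1 - (turnProb w B x : ℝ≥0∞))
  else 0

/-- Distribution of the blue set after `t` rounds, started from `S`. -/
noncomputable def state (w : V → V → ℝ≥0) (S : Finset V) : ℕ → Finset V → ℝ≥0∞
  | 0 => fun C => if C = S then 1 else 0
  | t + 1 => fun C => ∑ B : Finset V, state w S t B * stepProb w B C

/-- Expected propagation time `∑ₜ P(Bₜ ≠ V(G))`; this equals `E[τ]` when the
all-blue state is reachable from `S`, and `∞` otherwise. -/
noncomputable def ept (w : V → V → ℝ≥0) (S : Finset V) : ℝ≥0∞ :=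
  ∑' t : ℕ, ∑ C ∈ Finset.univ.filter (fun C : Finset V => C ≠ Finset.univ),
    state w S t C

/-- Minimum expected propagation time over singleton starting sets. -/
noncomputable def eptMin (w : V → V → ℝ≥0) : ℝ≥0∞ :=
  ⨅ v : V, ept w {v}

/-- The weight function of an unweighted directed graph: weight `1` on each
edge and `0` otherwise, so that `turnProb` is the fraction of in-neighbors
that are blue. -/
def unweight (adj : V → V → Prop) [DecidableRel adj] : V → V → ℝ≥0 :=
  fun u v => if adj u v then 1 else 0

end RZF

/-- `reachIn adj t a b` : there is a directed path of length at most `t`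
from `a` to `b` in the directed graph with adjacency relation `adj`. -/
def reachIn {V : Type*} (adj : V → V → Prop) : ℕ → V → V → Prop
  | 0, a, b => a = b
  | t + 1, a, b => reachIn adj t a b ∨ ∃ c, reachIn adj t a c ∧ adj c b

/-- The weight function of the weighted bidirectional path on vertices
`v₁, …, vₙ` (vertex `vᵢ` is `(⟨i - 1, _⟩ : Fin n)`): the edge from `vᵢ₋₁`
to `vᵢ` has weight `l i`, and the edge from `vᵢ₊₁` to `vᵢ` has weight `r i`. -/
noncomputable def pathWeight (n : ℕ) (l r : ℕ → ℝ≥0) : Fin n → Fin n → ℝ≥0 :=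
  fun u v =>
    if (u : ℕ) + 1 = (v : ℕ) then l ((v : ℕ) + 1)
    else if (v : ℕ) + 1 = (u : ℕ) then r ((v : ℕ) + 1)
    else 0

/-!
From the blue set `Iₖ = {v₁, …, vₖ}` the only vertex that can turn blue is `vₖ₊₁`, and it does
so with probability `qₖ = lₖ₊₁ / (lₖ₊₁ + rₖ₊₁)`, or `qₙ₋₁ = 1` for `vₙ`, which has no right
neighbour. So the process runs through the prefixes `I₁ ⊂ I₂ ⊂ ⋯ ⊂ Iₙ`, staying at `Iₖ` for a
geometric time of mean `1 / qₖ`, and the expected propagation time is `∑ₖ 1 / qₖ`. Formally, the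
one-step recurrence `P(Bₜ₊₁ = Iₖ) = (1 - qₖ) P(Bₜ = Iₖ) + qₖ₋₁ P(Bₜ = Iₖ₋₁)` gives
`qₖ ∑ₜ P(Bₜ = Iₖ) = 1` by induction on `k`. Starting at `vₙ` is starting at `v₁` on the
reversed path.
-/

open Finset

open Filter Topology in
theorem ENNReal.mul_tsum_eq_of_linear_recurrence {f g : ℕ → ℝ≥0∞} {q : ℝ≥0∞} (hq0 : q ≠ 0)
    (hq1 : q ≤ 1) (hf : ∀ t, f (t + 1) = (1 - q) * f t + g t) (hfin : f 0 + ∑' t, g t ≠ ∞) :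
    q * ∑' t, f t = f 0 + ∑' t, g t := by
  have hpartial : ∀ T, q * ∑ t ∈ range T, f t + f T = f 0 + ∑ t ∈ range T, g t := by
    intro T
    induction T with
    | zero => simp
    | succ T ih =>
      have hsplit : q * f T + (1 - q) * f T = f T := by
        rw [← add_mul, add_tsub_cancel_of_le hq1, one_mul]
      rw [sum_range_succ, sum_range_succ, ← add_assoc, ← ih, mul_add, hf, ← add_assoc,
        add_assoc (q * ∑ t ∈ range T, f t), hsplit]
  have hle : q * ∑' t, f t ≤ f 0 + ∑' t, g t := by
    rw [ENNReal.tsum_eq_iSup_nat, ENNReal.mul_iSup]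
    refine iSup_le fun T => ?_
    calc q * ∑ t ∈ range T, f t ≤ q * ∑ t ∈ range T, f t + f T := le_self_add
      _ = f 0 + ∑ t ∈ range T, g t := hpartial T
      _ ≤ f 0 + ∑' t, g t := by gcongr; exact ENNReal.sum_le_tsum _
  have hsum : ∑' t, f t ≠ ∞ := by
    intro h
    rw [h, ENNReal.mul_top hq0, top_le_iff] at hle
    exact hfin hle
  have hlhs : Tendsto (fun T => q * ∑ t ∈ range T, f t + f T) atTop (𝓝 (q * ∑' t, f t + 0)) :=
    (ENNReal.Tendsto.const_mul (ENNReal.tendsto_nat_tsum f)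
      (Or.inr (ne_top_of_le_ne_top ENNReal.one_ne_top hq1))).add
        (ENNReal.tendsto_atTop_zero_of_tsum_ne_top hsum)
  have hrhs : Tendsto (fun T => f 0 + ∑ t ∈ range T, g t) atTop (𝓝 (f 0 + ∑' t, g t)) :=
    tendsto_const_nhds.add (ENNReal.tendsto_nat_tsum g)
  rw [add_zero] at hlhs
  exact tendsto_nhds_unique (hlhs.congr hpartial) hrhs

namespace RZF

section Relabel

variable {V W : Type*} [Fintype V] [Fintype W]

theorem turnProb_comp_equiv (e : V ≃ W) (w : W → W → ℝ≥0) (B : Finset V) (x : V) :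
    turnProb (fun u v => w (e u) (e v)) B x = turnProb w (B.map e.toEmbedding) (e x) := by
  simp only [turnProb, sum_map, Equiv.coe_toEmbedding, e.sum_comp (fun u => w u (e x))]

variable [DecidableEq V] [DecidableEq W]

theorem stepProb_comp_equiv (e : V ≃ W) (w : W → W → ℝ≥0) (B C : Finset V) :
    stepProb (fun u v => w (e u) (e v)) B C =
      stepProb w (B.map e.toEmbedding) (C.map e.toEmbedding) := by
  simp only [stepProb, map_subset_map]
  split_ifs
  · congr 1 <;> refine prod_equiv e (by simp) fun x _ => by rw [turnProb_comp_equiv]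
  · rfl

theorem state_comp_equiv (e : V ≃ W) (w : W → W → ℝ≥0) (S : Finset V) (t : ℕ) (C : Finset V) :
    state (fun u v => w (e u) (e v)) S t C =
      state w (S.map e.toEmbedding) t (C.map e.toEmbedding) := by
  induction t generalizing C with
  | zero => simp only [state, map_inj]
  | succ t ih =>
    simp only [state, ih, stepProb_comp_equiv, ← Equiv.finsetCongr_apply]
    exact e.finsetCongr.sum_comp fun B => state w _ t B * stepProb w B _

theorem ept_comp_equiv (e : V ≃ W) (w : W → W → ℝ≥0) (S : Finset V) :
    ept (fun u v => w (e u) (e v)) S = ept w (S.map e.toEmbedding) := by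
  refine tsum_congr fun t => sum_equiv e.finsetCongr (fun C => ?_) fun C _ => ?_
  · simp only [mem_filter, mem_univ, true_and, Equiv.finsetCongr_apply]
    rw [← map_univ_equiv e, ne_eq, ne_eq, map_inj]
  · rw [state_comp_equiv, Equiv.finsetCongr_apply]

end Relabel

variable {V : Type*} [Fintype V]

theorem turnProb_le_one (w : V → V → ℝ≥0) (B : Finset V) (x : V) : turnProb w B x ≤ 1 :=
  div_le_one_of_le₀ (sum_le_sum_of_subset (subset_univ B)) zero_le

variable [DecidableEq V]

theorem stepProb_of_not_subset {w : V → V → ℝ≥0} {B C : Finset V} (h : ¬B ⊆ C) :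
    stepProb w B C = 0 :=
  if_neg h

theorem stepProb_univ_left {w : V → V → ℝ≥0} {C : Finset V} (hC : C ≠ univ) :
    stepProb w univ C = 0 :=
  stepProb_of_not_subset fun h => hC (univ_subset_iff.1 h)

theorem stepProb_of_unique_candidate {w : V → V → ℝ≥0} {B : Finset V} {x : V} (hx : x ∉ B)
    (hzero : ∀ y ∉ insert x B, turnProb w B y = 0) (C : Finset V) :
    stepProb w B C = if C = B then 1 - (turnProb w B x : ℝ≥0∞)
      else if C = insert x B then (turnProb w B x : ℝ≥0∞) else 0 := by
  have hrest : ∏ y ∈ (insert x B)ᶜ, (1 - (turnProb w B y : ℝ≥0∞)) = 1 :=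
    prod_eq_one fun y hy => by simp [hzero y (mem_compl.1 hy)]
  have hne : B ≠ insert x B := fun h => hx (h ▸ mem_insert_self x B)
  by_cases hBC : B ⊆ C
  swap
  · rw [stepProb_of_not_subset hBC, if_neg (by rintro rfl; exact hBC subset_rfl),
      if_neg (by rintro rfl; exact hBC (subset_insert _ _))]
  by_cases hCx : C ⊆ insert x B
  swap
  · obtain ⟨y, hyC, hyx⟩ := not_subset.1 hCx
    have hy : y ∈ C \ B := mem_sdiff.2 ⟨hyC, fun h => hyx (mem_insert_of_mem h)⟩
    rw [stepProb, if_pos hBC, prod_eq_zero hy (by simp [hzero y hyx]), zero_mul,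
      if_neg (by rintro rfl; exact hCx (subset_insert _ _)),
      if_neg (by rintro rfl; exact hCx subset_rfl)]
  by_cases hxC : x ∈ C
  · have hC : C = insert x B := hCx.antisymm (insert_subset hxC hBC)
    rw [stepProb, if_pos hBC, if_neg (hC ▸ hne.symm), if_pos hC, hC, insert_sdiff_cancel hx,
      prod_singleton, hrest, mul_one]
  · obtain rfl : C = B := ((subset_insert_iff_of_notMem hxC).1 hCx).antisymm hBC
    rw [stepProb, if_pos hBC, if_pos rfl, sdiff_self, bot_eq_empty, prod_empty, one_mul,
      ← mul_prod_erase _ _ (mem_compl.2 hx), ← compl_insert, hrest, mul_one]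

/-- A chain of blue sets along which the RZF process from `blue 0` is forced to run: from
`blue k` the only white vertex that can turn blue is `next k`. -/
structure ForcingChain (w : V → V → ℝ≥0) (N : ℕ) where
  blue : ℕ → Finset V
  next : ℕ → V
  next_notMem : ∀ k < N, next k ∉ blue k
  blue_succ : ∀ k < N, blue (k + 1) = insert (next k) (blue k)
  turnProb_eq_zero : ∀ k < N, ∀ y ∉ blue (k + 1), turnProb w (blue k) y = 0
  turnProb_next_ne_zero : ∀ k < N, turnProb w (blue k) (next k) ≠ 0
  blue_last : blue N = univ

namespace ForcingChain

variable {w : V → V → ℝ≥0} {N : ℕ} (c : ForcingChain w N)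

noncomputable def advanceProb (k : ℕ) : ℝ≥0∞ := turnProb w (c.blue k) (c.next k)

theorem advanceProb_le_one (k : ℕ) : c.advanceProb k ≤ 1 :=
  ENNReal.coe_le_one_iff.2 (turnProb_le_one _ _ _)

theorem advanceProb_ne_zero {k : ℕ} (hk : k < N) : c.advanceProb k ≠ 0 :=
  ENNReal.coe_ne_zero.2 (c.turnProb_next_ne_zero k hk)

theorem card_blue {k : ℕ} (hk : k ≤ N) : #(c.blue k) = #(c.blue 0) + k := by
  induction k with
  | zero => rfl
  | succ k ih =>
    rw [c.blue_succ k hk, card_insert_of_notMem (c.next_notMem k hk), ih (by omega), add_assoc]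

theorem blue_inj {j k : ℕ} (hj : j ≤ N) (hk : k ≤ N) : c.blue j = c.blue k ↔ j = k := by
  refine ⟨fun h => ?_, fun h => h ▸ rfl⟩
  have := congrArg card h
  rw [c.card_blue hj, c.card_blue hk] at this
  omega

theorem blue_ne_univ {k : ℕ} (hk : k < N) : c.blue k ≠ univ := by
  rw [← c.blue_last, Ne, c.blue_inj hk.le le_rfl]
  exact hk.ne

theorem stepProb_blue_of_lt {j : ℕ} (hj : j < N) (C : Finset V) :
    stepProb w (c.blue j) C = if C = c.blue j then 1 - c.advanceProb j
      else if C = c.blue (j + 1) then c.advanceProb j else 0 := by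
  rw [c.blue_succ j hj]
  exact stepProb_of_unique_candidate (c.next_notMem j hj)
    (c.blue_succ j hj ▸ c.turnProb_eq_zero j hj) C

theorem stepProb_blue_blue {j k : ℕ} (hj : j ≤ N) (hk : k < N) :
    stepProb w (c.blue j) (c.blue k) =
      (if j = k then 1 - c.advanceProb k else 0) + (if j + 1 = k then c.advanceProb j else 0) := by
  rcases hj.lt_or_eq with hj | rfl
  · rw [c.stepProb_blue_of_lt hj, if_congr (c.blue_inj hk.le hj.le) rfl rfl,
      if_congr (c.blue_inj hk.le hj) rfl rfl]
    split_ifs <;> subst_vars <;> first | omega | simp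
  · rw [c.blue_last, stepProb_univ_left (c.blue_ne_univ hk), if_neg (by omega), if_neg (by omega),
      add_zero]

theorem exists_eq_blue_of_state_ne_zero {t : ℕ} {C : Finset V}
    (h : state w (c.blue 0) t C ≠ 0) : ∃ k ≤ N, C = c.blue k := by
  induction t generalizing C with
  | zero =>
    refine ⟨0, zero_le, ?_⟩
    by_contra hC
    exact h (if_neg hC)
  | succ t ih =>
    obtain ⟨B, -, hB⟩ := exists_ne_zero_of_sum_ne_zero h
    obtain ⟨j, hj, rfl⟩ := ih (left_ne_zero_of_mul hB)
    have hstep := right_ne_zero_of_mul hB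
    rcases hj.lt_or_eq with hj | hjN
    · rw [c.stepProb_blue_of_lt hj] at hstep
      split_ifs at hstep with h1 h2
      · exact ⟨j, hj.le, h1⟩
      · exact ⟨j + 1, hj, h2⟩
      · exact absurd rfl hstep
    · refine ⟨N, le_rfl, ?_⟩
      rw [hjN, c.blue_last] at hstep
      rw [c.blue_last]
      by_contra hC
      exact hstep (stepProb_univ_left hC)

theorem state_zero_blue {k : ℕ} (hk : k ≤ N) :
    state w (c.blue 0) 0 (c.blue k) = if k = 0 then 1 else 0 :=
  if_congr (c.blue_inj hk zero_le) rfl rfl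

theorem state_succ_eq_sum_blue (t : ℕ) (C : Finset V) :
    state w (c.blue 0) (t + 1) C =
      ∑ j ∈ range (N + 1), state w (c.blue 0) t (c.blue j) * stepProb w (c.blue j) C := by
  simp only [state]
  rw [← sum_image (f := fun B => state w (c.blue 0) t B * stepProb w B C) fun i hi j hj h =>
    (c.blue_inj (Nat.lt_succ_iff.1 (mem_range.1 hi)) (Nat.lt_succ_iff.1 (mem_range.1 hj))).1 h]
  refine (sum_subset (subset_univ _) fun B _ hB => ?_).symm
  by_contra hne
  obtain ⟨k, hk, rfl⟩ := c.exists_eq_blue_of_state_ne_zero (left_ne_zero_of_mul hne)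
  exact hB (mem_image_of_mem _ (mem_range.2 (Nat.lt_succ_of_le hk)))

theorem state_succ_blue_zero (hN : 0 < N) (t : ℕ) :
    state w (c.blue 0) (t + 1) (c.blue 0) =
      (1 - c.advanceProb 0) * state w (c.blue 0) t (c.blue 0) := by
  rw [c.state_succ_eq_sum_blue, sum_congr rfl fun j hj => by
    rw [c.stepProb_blue_blue (Nat.lt_succ_iff.1 (mem_range.1 hj)) hN]]
  simp [mul_comm]

theorem state_succ_blue_succ {k : ℕ} (hk : k + 1 < N) (t : ℕ) :
    state w (c.blue 0) (t + 1) (c.blue (k + 1)) =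
      (1 - c.advanceProb (k + 1)) * state w (c.blue 0) t (c.blue (k + 1)) +
        c.advanceProb k * state w (c.blue 0) t (c.blue k) := by
  rw [c.state_succ_eq_sum_blue, sum_congr rfl fun j hj => by
    rw [c.stepProb_blue_blue (Nat.lt_succ_iff.1 (mem_range.1 hj)) hk]]
  simp [add_mul, sum_add_distrib, ite_mul, hk.le, (by omega : k ≤ N), mul_comm]

theorem advanceProb_mul_tsum_state {k : ℕ} (hk : k < N) :
    c.advanceProb k * ∑' t, state w (c.blue 0) t (c.blue k) = 1 := by
  induction k with
  | zero =>
    have hinflow : state w (c.blue 0) 0 (c.blue 0) + ∑' _ : ℕ, (0 : ℝ≥0∞) = 1 := by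
      simp [c.state_zero_blue]
    rw [ENNReal.mul_tsum_eq_of_linear_recurrence (c.advanceProb_ne_zero hk) (c.advanceProb_le_one 0)
      (fun t => by rw [add_zero, c.state_succ_blue_zero hk]) (hinflow ▸ ENNReal.one_ne_top),
      hinflow]
  | succ k ih =>
    have hinflow : state w (c.blue 0) 0 (c.blue (k + 1)) +
        ∑' t, c.advanceProb k * state w (c.blue 0) t (c.blue k) = 1 := by
      rw [ENNReal.tsum_mul_left, ih (by omega), c.state_zero_blue hk.le, if_neg k.succ_ne_zero,
        zero_add]
    rw [ENNReal.mul_tsum_eq_of_linear_recurrence (c.advanceProb_ne_zero hk) (c.advanceProb_le_one _)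
      (c.state_succ_blue_succ hk) (hinflow ▸ ENNReal.one_ne_top), hinflow]

theorem sum_state_ne_univ (t : ℕ) :
    ∑ C ∈ univ.filter (fun C : Finset V => C ≠ univ), state w (c.blue 0) t C =
      ∑ k ∈ range N, state w (c.blue 0) t (c.blue k) := by
  rw [← sum_image fun i hi j hj h =>
    (c.blue_inj (mem_range.1 hi).le (mem_range.1 hj).le).1 h]
  refine (sum_subset (fun C hC => ?_) fun C hC hCN => ?_).symm
  · obtain ⟨k, hk, rfl⟩ := mem_image.1 hC
    exact mem_filter.2 ⟨mem_univ _, c.blue_ne_univ (mem_range.1 hk)⟩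
  · by_contra hne
    obtain ⟨k, hk, rfl⟩ := c.exists_eq_blue_of_state_ne_zero hne
    rcases hk.lt_or_eq with hk | rfl
    · exact hCN (mem_image_of_mem _ (mem_range.2 hk))
    · exact (mem_filter.1 hC).2 c.blue_last

theorem ept_eq_sum_inv : ept w (c.blue 0) = ∑ k ∈ range N, (c.advanceProb k)⁻¹ := by
  simp only [ept, c.sum_state_ne_univ]
  rw [Summable.tsum_finsetSum fun _ _ => ENNReal.summable]
  refine sum_congr rfl fun k hk => ENNReal.eq_inv_of_mul_eq_one_left ?_
  rw [mul_comm, c.advanceProb_mul_tsum_state (mem_range.1 hk)]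

end ForcingChain


end RZF

section PathWeight

variable {n : ℕ} {l r : ℕ → ℝ≥0}

theorem pathWeight_of_succ_eq {u v : Fin n} (h : (u : ℕ) + 1 = v) :
    pathWeight n l r u v = l (v + 1) :=
  if_pos h

theorem pathWeight_of_eq_succ {u v : Fin n} (h : (v : ℕ) + 1 = u) :
    pathWeight n l r u v = r (v + 1) := by
  rw [pathWeight, if_neg (by omega), if_pos h]

theorem pathWeight_eq_zero {u v : Fin n} (h₁ : (u : ℕ) + 1 ≠ v) (h₂ : (v : ℕ) + 1 ≠ u) :
    pathWeight n l r u v = 0 := by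
  rw [pathWeight, if_neg h₁, if_neg h₂]

theorem pathWeight_comp_revPerm :
    (fun u v => pathWeight n l r (Fin.revPerm u) (Fin.revPerm v)) =
      pathWeight n (fun i => r (n + 1 - i)) (fun i => l (n + 1 - i)) := by
  funext u v
  have := u.isLt
  have := v.isLt
  simp only [pathWeight, Fin.revPerm_apply, Fin.val_rev]
  split_ifs <;> first | omega | (congr 1 <;> omega)

def pathPrefix (n k : ℕ) : Finset (Fin n) := univ.filter fun i => (i : ℕ) ≤ k

theorem mem_pathPrefix {k : ℕ} {i : Fin n} : i ∈ pathPrefix n k ↔ (i : ℕ) ≤ k := by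
  simp [pathPrefix]

theorem sum_pathPrefix_pathWeight {k : ℕ} {v : Fin n} (hv : (v : ℕ) = k + 1) :
    ∑ u ∈ pathPrefix n k, pathWeight n l r u v = l (k + 2) := by
  have hk : k < n := by have := v.isLt; omega
  have hzero : ∀ u ∈ pathPrefix n k, u ≠ ⟨k, hk⟩ → pathWeight n l r u v = 0 := fun u hu hne =>
    pathWeight_eq_zero (fun h => hne (Fin.ext (show (u : ℕ) = k by omega)))
      (by have := mem_pathPrefix.1 hu; omega)
  rw [sum_eq_single_of_mem (⟨k, hk⟩ : Fin n) (mem_pathPrefix.2 le_rfl) hzero,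
    pathWeight_of_succ_eq hv.symm, hv]

theorem sum_pathPrefix_pathWeight_eq_zero {k : ℕ} {v : Fin n} (hv : k + 1 < v) :
    ∑ u ∈ pathPrefix n k, pathWeight n l r u v = 0 :=
  sum_eq_zero fun u hu => by
    have := mem_pathPrefix.1 hu
    exact pathWeight_eq_zero (by omega) (by omega)

theorem sum_pathWeight {k : ℕ} {v : Fin n} (hv : (v : ℕ) = k + 1) :
    ∑ u, pathWeight n l r u v = l (k + 2) + if k + 2 < n then r (k + 2) else 0 := by
  have hk : k < n := by have := v.isLt; omega
  split_ifs with hk₂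
  · rw [Fintype.sum_eq_add ⟨k, hk⟩ ⟨k + 2, hk₂⟩ (by simp)
      fun u hu => pathWeight_eq_zero (fun h => hu.1 (Fin.ext (show (u : ℕ) = k by omega)))
        (fun h => hu.2 (Fin.ext (show (u : ℕ) = k + 2 by omega))),
      pathWeight_of_succ_eq hv.symm, pathWeight_of_eq_succ (show (v : ℕ) + 1 = k + 2 by omega), hv]
  · rw [Fintype.sum_eq_single ⟨k, hk⟩ fun u hu => pathWeight_eq_zero
      (fun h => hu (Fin.ext (show (u : ℕ) = k by omega))) (by omega),
      pathWeight_of_succ_eq hv.symm, hv, add_zero]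

theorem turnProb_pathPrefix {k : ℕ} {v : Fin n} (hv : (v : ℕ) = k + 1) :
    RZF.turnProb (pathWeight n l r) (pathPrefix n k) v =
      l (k + 2) / (l (k + 2) + if k + 2 < n then r (k + 2) else 0) := by
  rw [RZF.turnProb, sum_pathPrefix_pathWeight hv, sum_pathWeight hv]

end PathWeight

/-- `blue k = {v₁, …, vₖ₊₁}` and `next k = vₖ₊₂`; the `min` only makes `next` total. -/
def pathChain (m : ℕ) (l r : ℕ → ℝ≥0) (hl : ∀ i, 2 ≤ i → i ≤ m + 2 → 0 < l i) :
    RZF.ForcingChain (pathWeight (m + 2) l r) (m + 1) where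
  blue := pathPrefix (m + 2)
  next k := ⟨min (k + 1) (m + 1), by omega⟩
  next_notMem k hk := by rw [mem_pathPrefix]; show ¬min (k + 1) (m + 1) ≤ k; omega
  blue_succ k hk := by ext i; simp only [mem_pathPrefix, mem_insert, Fin.ext_iff]; omega
  turnProb_eq_zero k hk y hy := by
    rw [mem_pathPrefix] at hy
    rw [RZF.turnProb, sum_pathPrefix_pathWeight_eq_zero (by omega), zero_div]
  turnProb_next_ne_zero k hk := by
    rw [turnProb_pathPrefix (show min (k + 1) (m + 1) = k + 1 by omega)]
    have hlk := hl (k + 2) (by omega) (by omega)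
    exact (div_pos hlk (lt_add_of_pos_of_le hlk zero_le)).ne'
  blue_last := by ext i; simp only [mem_pathPrefix, mem_univ, iff_true]; omega

theorem inv_advanceProb_pathChain (m : ℕ) (l r : ℕ → ℝ≥0) (hl : ∀ i, 2 ≤ i → i ≤ m + 2 → 0 < l i)
    {k : ℕ} (hk : k ≤ m) : ((pathChain m l r hl).advanceProb k)⁻¹ =
      ((l (k + 2) : ℝ≥0∞) + if k < m then (r (k + 2) : ℝ≥0∞) else 0) / l (k + 2) := by
  have hlk := (hl (k + 2) (by omega) (by omega)).ne'
  rw [RZF.ForcingChain.advanceProb, pathChain]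
  dsimp only
  rw [turnProb_pathPrefix (show min (k + 1) (m + 1) = k + 1 by omega),
    ENNReal.coe_div (add_ne_zero.2 (Or.inl hlk)),
    ENNReal.inv_div (Or.inr ENNReal.coe_ne_top) (Or.inr (ENNReal.coe_ne_zero.2 hlk))]
  simp [apply_ite]

theorem ept_pathWeight_zero (m : ℕ) (l r : ℕ → ℝ≥0) (hl : ∀ i, 2 ≤ i → i ≤ m + 2 → 0 < l i) :
    RZF.ept (pathWeight (m + 2) l r) {0} =
      (∑ i ∈ Icc 2 (m + 1), ((l i : ℝ≥0∞) + r i) / l i) + 1 := by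
  have hstart : ({0} : Finset (Fin (m + 2))) = (pathChain m l r hl).blue 0 := by
    ext i
    show i ∈ ({0} : Finset _) ↔ i ∈ pathPrefix (m + 2) 0
    rw [mem_singleton, mem_pathPrefix, Fin.ext_iff, Fin.val_zero, Nat.le_zero]
  have hlm : (l (m + 2) : ℝ≥0∞) ≠ 0 := ENNReal.coe_ne_zero.2 (hl (m + 2) (by omega) le_rfl).ne'
  rw [hstart, RZF.ForcingChain.ept_eq_sum_inv, sum_range_succ,
    inv_advanceProb_pathChain _ _ _ _ le_rfl, if_neg (lt_irrefl m), add_zero,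
    ENNReal.div_self hlm ENNReal.coe_ne_top, ← Ico_add_one_right_eq_Icc, sum_Ico_eq_sum_range]
  refine congrArg (· + 1) (sum_congr (by simp) fun k hk => ?_)
  rw [inv_advanceProb_pathChain _ _ _ _ (by simp at hk; omega), if_pos (by simpa using hk),
    add_comm 2 k]

theorem ept_pathWeight_last (m : ℕ) (l r : ℕ → ℝ≥0) (hr : ∀ i, 1 ≤ i → i ≤ m + 1 → 0 < r i) :
    RZF.ept (pathWeight (m + 2) l r) {Fin.last (m + 1)} =
      (∑ i ∈ Icc 2 (m + 1), ((l i : ℝ≥0∞) + r i) / r i) + 1 := by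
  have hlast : {Fin.last (m + 1)} = ({0} : Finset (Fin (m + 2))).map Fin.revPerm.toEmbedding := by
    simp
  rw [hlast, ← RZF.ept_comp_equiv, pathWeight_comp_revPerm,
    ept_pathWeight_zero m _ _ fun i hi₁ hi₂ => hr _ (by omega) (by omega)]
  refine congrArg (· + 1) (sum_nbij' (fun i => m + 2 + 1 - i) (fun i => m + 2 + 1 - i) ?_ ?_ ?_ ?_
    fun i _ => by rw [add_comm]) <;>
  · intro i hi
    simp only [mem_Icc] at hi ⊢
    omega

/-- For the weighted bidirectional path on `v₁, …, vₙ`, with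
all edge weights positive,
`ept_rzf(P, v₁) = ∑_{i=2}^{n-1} (lᵢ + rᵢ)/lᵢ + 1` and
`ept_rzf(P, vₙ) = ∑_{i=2}^{n-1} (lᵢ + rᵢ)/rᵢ + 1`. -/
theorem rzf_path_ept (n : ℕ) (hn : 2 ≤ n) (l r : ℕ → ℝ≥0)
    (hl : ∀ i : ℕ, 2 ≤ i → i ≤ n → 0 < l i)
    (hr : ∀ i : ℕ, 1 ≤ i → i ≤ n - 1 → 0 < r i) :
    RZF.ept (pathWeight n l r) {(⟨0, by omega⟩ : Fin n)} =
        (∑ i ∈ Finset.Icc 2 (n - 1),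
          ((l i : ℝ≥0∞) + (r i : ℝ≥0∞)) / (l i : ℝ≥0∞)) + 1 ∧
    RZF.ept (pathWeight n l r) {(⟨n - 1, by omega⟩ : Fin n)} =
        (∑ i ∈ Finset.Icc 2 (n - 1),
          ((l i : ℝ≥0∞) + (r i : ℝ≥0∞)) / (r i : ℝ≥0∞)) + 1 := by
  obtain ⟨m, rfl⟩ : ∃ m, n = m + 2 := ⟨n - 2, by omega⟩
  exact ⟨ept_pathWeight_zero m l r hl, ept_pathWeight_last m l r hr⟩
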